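/- Equivalence of fill1 and fill2 characterizations: for a directed graph G on {0,...,n-1}, let G⁺ be the 'filled graph' obtained by the closure rule: whenever there is a fill-path from i to j in the current graph, add edge (i,j), iterated to a fixed point. Then the edge set of G⁺ equals exactly { (i,j) : there is a fill-path from i to j in the original graph G }. In particular, applying the fill-path criterion to the filled graph produces no additional edges beyond applying it once to the original graph. -/

import Mathlib

/-- `IsPath G a l b` : directed path from `a` to `b` with intermediate vertices `l`. -/
def IsPath (G : ℕ → ℕ → Prop) : ℕ → List ℕ → ℕ → Prop
  | a, [], b => G a b
  | a, x :: xs, b => G a x ∧ IsPath G x xs b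

/-- A fill-path from `i` to `j` in a graph `H`: all intermediates are `< min i j`. -/
def FillPath (H : ℕ → ℕ → Prop) (i j : ℕ) : Prop :=
  ∃ l, IsPath H i l j ∧ ∀ v ∈ l, v < i ∧ v < j

/-- The filled graph `G⁺`: the least supergraph of `G` closed under the rule
"a fill-path from `i` to `j` (in the current graph) adds the edge `(i,j)`",
iterated to a fixed point (defined as the intersection of all closed supergraphs). -/
def FilledClosure (G : ℕ → ℕ → Prop) (i j : ℕ) : Prop :=
  ∀ R : ℕ → ℕ → Prop,
    (∀ a b, G a b → R a b) →
    (∀ a b l, IsPath R a l b → (∀ v ∈ l, v < a ∧ v < b) → R a b) →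
    R i j

/-! Splicing the `G`-fill-paths behind the edges of a fill-path of `FillPath G` yields a
fill-path of `G`: every spliced-in vertex lies below an intermediate vertex of the outer path,
hence below both of its ends. So `FillPath G` is already closed under the fill rule. -/

namespace IsPath

variable {G H : ℕ → ℕ → Prop}

theorem append {a b c : ℕ} {l l' : List ℕ} (h : IsPath G a l b) (h' : IsPath G b l' c) :
    IsPath G a (l ++ b :: l') c := by
  induction l generalizing a with
  | nil => exact ⟨h, h'⟩
  | cons x xs ih => exact ⟨h.1, ih h.2⟩

theorem mono (hGH : ∀ a b, G a b → H a b) {a b : ℕ} {l : List ℕ} (h : IsPath G a l b) :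
    IsPath H a l b := by
  induction l generalizing a with
  | nil => exact hGH a b h
  | cons x xs ih => exact ⟨hGH a x h.1, ih h.2⟩

/- The bound `min a b ≤ m` is the invariant that survives passing from `a` to the next
vertex `x < m`. -/
theorem exists_isPath_lt_of_fillPath {a b m : ℕ} {l : List ℕ} (h : IsPath (FillPath G) a l b)
    (hab : min a b ≤ m) (hl : ∀ v ∈ l, v < m) :
    ∃ l', IsPath G a l' b ∧ ∀ v ∈ l', v < m := by
  induction l generalizing a with
  | nil =>
    obtain ⟨l', hp, hv⟩ := h
    exact ⟨l', hp, fun v hv' => (lt_min_iff.2 (hv v hv')).trans_le hab⟩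
  | cons x xs ih =>
    obtain ⟨⟨l₁, hp₁, hv₁⟩, hrest⟩ := h
    have hxm : x < m := hl x List.mem_cons_self
    obtain ⟨l₂, hp₂, hv₂⟩ :=
      ih hrest ((min_le_left x b).trans hxm.le) fun v hv => hl v (List.mem_cons_of_mem x hv)
    refine ⟨l₁ ++ x :: l₂, hp₁.append hp₂, fun v hv => ?_⟩
    simp only [List.mem_append, List.mem_cons] at hv
    rcases hv with h₁ | rfl | h₂
    · exact (hv₁ v h₁).2.trans hxm
    · exact hxm
    · exact hv₂ v h₂

end IsPath

theorem fillPath_of_adj {G : ℕ → ℕ → Prop} {a b : ℕ} (h : G a b) : FillPath G a b :=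
  ⟨[], h, by simp⟩

theorem fillPath_of_isPath_fillPath {G : ℕ → ℕ → Prop} (a b : ℕ) (l : List ℕ)
    (h : IsPath (FillPath G) a l b) (hl : ∀ v ∈ l, v < a ∧ v < b) : FillPath G a b := by
  obtain ⟨l', hp, hv⟩ := h.exists_isPath_lt_of_fillPath le_rfl fun v hv => lt_min_iff.2 (hl v hv)
  exact ⟨l', hp, fun v hv' => lt_min_iff.1 (hv v hv')⟩

/-- Equivalence of fill1 and fill2 characterizations: the edges of the filled
graph `G⁺` are exactly the pairs joined by a fill-path in the original graph
`G`; iterating the fill-path rule on the filled graph adds nothing new. -/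
theorem filled_closure_eq_fillpath (G : ℕ → ℕ → Prop) (i j : ℕ) :
    FilledClosure G i j ↔ FillPath G i j := by
  constructor
  · intro h
    exact h (FillPath G) (fun _ _ => fillPath_of_adj) fillPath_of_isPath_fillPath
  · rintro ⟨l, hp, hl⟩ R hG hR
    exact hR i j l (hp.mono hG) hl
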